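/- Let Q_ε be symmetric positive definite, p ∈ ℝ^N, Ω = {v ≥ 0 : ‖v‖₀ ≤ m}. Suppose there exists w̃ ∈ Ω with ‖w̃‖₀ ≤ m, w̃ in the simplex, and pᵀw̃ > 0. If v̂ minimizes f(v) = ½ vᵀQ_ε v − pᵀv over Ω, then v̂ ≠ 0 and pᵀv̂ = v̂ᵀQ_ε v̂ > 0. -/

import Mathlib

/-!
Along the ray `t ↦ t • v` the objective is the scalar quadratic `t² a / 2 - t b` with
`a = vᵀQv` and `b = pᵀv`. Since `Ω` is a cone, at a minimiser `v̂` this quadratic has an interior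
minimum at `t = 1`, so its derivative `a - b` vanishes. The ray through `w̃` with `pᵀw̃ > 0`
reaches negative values, while the objective vanishes at `0`, so `v̂ ≠ 0`; positive
definiteness then gives `v̂ᵀQv̂ > 0`.
-/

open Matrix Finset

theorem eq_of_isMinOn_Ici_sq_mul_sub_mul (a b : ℝ)
    (h : IsMinOn (fun t : ℝ => t ^ 2 * a / 2 - t * b) (Set.Ici 0) 1) : b = a := by
  have hderiv : HasDerivAt (fun t : ℝ => t ^ 2 * a / 2 - t * b)
      ((2 : ℕ) * 1 ^ (2 - 1) * a / 2 - 1 * b) 1 :=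
    (((hasDerivAt_pow 2 1).mul_const a).div_const 2).sub ((hasDerivAt_id' (x := 1)).mul_const b)
  have := (h.isLocalMin (Ici_mem_nhds one_pos)).hasDerivAt_eq_zero hderiv
  norm_num at this
  linarith

theorem exists_sq_mul_sub_mul_neg (a : ℝ) {b : ℝ} (hb : 0 < b) :
    ∃ t : ℝ, 0 ≤ t ∧ t ^ 2 * a / 2 - t * b < 0 := by
  refine ⟨b / (|a| + b), by positivity, ?_⟩
  have ht : 0 < b / (|a| + b) := by positivity
  have hta : b / (|a| + b) * |a| < b := by
    rw [div_mul_eq_mul_div, div_lt_iff₀ (by positivity)]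
    nlinarith [abs_nonneg a]
  nlinarith [le_abs_self a]

section QuadObjective

variable {ι : Type*} [Fintype ι]

noncomputable def quadObjective (Q : Matrix ι ι ℝ) (p v : ι → ℝ) : ℝ :=
  1 / 2 * (v ⬝ᵥ Q *ᵥ v) - p ⬝ᵥ v

theorem quadObjective_smul (Q : Matrix ι ι ℝ) (p v : ι → ℝ) (t : ℝ) :
    quadObjective Q p (t • v) = t ^ 2 * (v ⬝ᵥ Q *ᵥ v) / 2 - t * (p ⬝ᵥ v) := by
  simp only [quadObjective, mulVec_smul, smul_dotProduct, dotProduct_smul, smul_eq_mul]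
  ring

theorem quadObjective_zero (Q : Matrix ι ι ℝ) (p : ι → ℝ) : quadObjective Q p 0 = 0 := by
  simp [quadObjective]

variable {C : Set (ι → ℝ)} {Q : Matrix ι ι ℝ} {p vh : ι → ℝ}

theorem dotProduct_eq_of_isMinOn_cone (hC : ∀ t : ℝ, 0 ≤ t → ∀ v ∈ C, t • v ∈ C)
    (hv : vh ∈ C) (hmin : IsMinOn (quadObjective Q p) C vh) :
    p ⬝ᵥ vh = vh ⬝ᵥ Q *ᵥ vh := by
  refine eq_of_isMinOn_Ici_sq_mul_sub_mul _ _ fun t (ht : 0 ≤ t) => ?_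
  have h := isMinOn_iff.mp hmin _ (hC t ht vh hv)
  have h1 := quadObjective_smul Q p vh 1
  rw [one_smul] at h1
  rwa [quadObjective_smul, h1] at h

theorem ne_zero_of_isMinOn_cone (hC : ∀ t : ℝ, 0 ≤ t → ∀ v ∈ C, t • v ∈ C)
    {w : ι → ℝ} (hw : w ∈ C) (hpw : 0 < p ⬝ᵥ w) (hmin : IsMinOn (quadObjective Q p) C vh) :
    vh ≠ 0 := by
  rintro rfl
  obtain ⟨t, ht, hneg⟩ := exists_sq_mul_sub_mul_neg (w ⬝ᵥ Q *ᵥ w) hpw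
  have := isMinOn_iff.mp hmin _ (hC t ht w hw)
  rw [quadObjective_smul, quadObjective_zero] at this
  linarith

end QuadObjective

theorem smul_mem_sparse_nonneg {ι : Type*} [Fintype ι] {m : ℕ} {t : ℝ} (ht : 0 ≤ t)
    {v : ι → ℝ} (hv : v ∈ {v : ι → ℝ | (∀ i, 0 ≤ v i) ∧ (univ.filter fun i => v i ≠ 0).card ≤ m}) :
    t • v ∈ {v : ι → ℝ | (∀ i, 0 ≤ v i) ∧ (univ.filter fun i => v i ≠ 0).card ≤ m} := by
  refine ⟨fun i => mul_nonneg ht (hv.1 i), le_trans (card_le_card fun i => ?_) hv.2⟩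
  simp only [mem_filter, mem_univ, true_and, Pi.smul_apply, smul_eq_mul]
  exact right_ne_zero_of_mul

theorem stmt_2 (N m : ℕ) (Q : Matrix (Fin N) (Fin N) ℝ) (hQ : Q.PosDef)
    (p : Fin N → ℝ)
    (Ω : Set (Fin N → ℝ))
    (hΩ : Ω = {v | (∀ i, 0 ≤ v i) ∧ (Finset.univ.filter fun i => v i ≠ 0).card ≤ m})
    (hexist : ∃ w ∈ Ω, (∑ i, w i) = 1 ∧ 0 < p ⬝ᵥ w)
    (vh : Fin N → ℝ) (hv : vh ∈ Ω)
    (hmin : ∀ v ∈ Ω,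
      (1/2) * (vh ⬝ᵥ Q.mulVec vh) - p ⬝ᵥ vh ≤ (1/2) * (v ⬝ᵥ Q.mulVec v) - p ⬝ᵥ v) :
    vh ≠ 0 ∧ p ⬝ᵥ vh = vh ⬝ᵥ Q.mulVec vh ∧ 0 < p ⬝ᵥ vh := by
  have hcone : ∀ t : ℝ, 0 ≤ t → ∀ v ∈ Ω, t • v ∈ Ω := fun t ht v hv => by
    subst hΩ
    exact smul_mem_sparse_nonneg ht hv
  obtain ⟨w, hw, -, hpw⟩ := hexist
  have hne : vh ≠ 0 := ne_zero_of_isMinOn_cone hcone hw hpw hmin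
  have heq : p ⬝ᵥ vh = vh ⬝ᵥ Q *ᵥ vh := dotProduct_eq_of_isMinOn_cone hcone hv hmin
  exact ⟨hne, heq, heq ▸ hQ.dotProduct_mulVec_pos hne⟩
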